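/- Necessity of the two-dimensional Nyquist rate: Let Ω > 0 and h > π/Ω. Then there exists a nonzero continuous function f ∈ L²(ℝ²) whose Fourier transform is supported in the closed ball of radius Ω such that f(k h) = 0 for every k ∈ ℤ². In particular, Ω-band-limited functions on ℝ² are not uniquely determined by samples on the grid hℤ² when h > π/Ω. -/

import Mathlib

open MeasureTheory

noncomputable section

/-- The plane `ℝ²` as a Euclidean space. -/
abbrev E2 := EuclideanSpace ℝ (Fin 2)

/-- Inverse Fourier transform on `ℝ²` with the convention
`f(x) = (2π)⁻² ∫ F(ξ) e^{i⟨x,ξ⟩} dξ`. -/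
def invFourier2 (F : E2 → ℂ) (x : E2) : ℂ :=
  (1 / (2 * Real.pi) ^ 2 : ℂ) *
    ∫ ξ : E2, Complex.exp (Complex.I * ((inner ℝ ξ x : ℝ) : ℂ)) * F ξ

/-- The grid point `k h = (k₁ h, k₂ h) ∈ ℝ²` for `k ∈ ℤ²`. -/
def gridPt (h : ℝ) (k : ℤ × ℤ) : E2 :=
  (WithLp.equiv 2 (Fin 2 → ℝ)).symm ![(k.1 : ℝ) * h, (k.2 : ℝ) * h]

/-! Translating the spectrum by `q` multiplies `invFourier2` by the character `e^{i⟨q,x⟩}`, so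
the dipole `ψ(ξ - p) - ψ(ξ + p)` of a bump `ψ` has inverse transform `2i sin⟨p,x⟩ ψ̌(x)`.
For `p = (π/h, 0)` we get `sin⟨p, kh⟩ = sin(k₁π) = 0` at every grid point, and `h > π/Ω` is exactly
what leaves room for a bump around `±p` inside the ball of radius `Ω`. The dipole is a nonzero
Schwartz function, so by Fourier inversion its transform is a nonzero Schwartz function, hence
continuous and square integrable. -/

open Complex
open scoped FourierTransform SchwartzMap ContDiff

lemma invFourier2_zero : invFourier2 0 = 0 := by
  ext x
  simp [invFourier2]

lemma invFourier2_comp_sub (G : E2 → ℂ) (q x : E2) :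
    invFourier2 (fun ξ => G (ξ - q)) x = exp (I * (inner ℝ q x : ℝ)) * invFourier2 G x := by
  have hshift : ∫ ξ, exp (I * (inner ℝ ξ x : ℝ)) * G (ξ - q)
      = exp (I * (inner ℝ q x : ℝ)) * ∫ ξ, exp (I * (inner ℝ ξ x : ℝ)) * G ξ := by
    rw [← integral_add_right_eq_self _ q, ← integral_const_mul]
    refine integral_congr_ae (Filter.Eventually.of_forall fun ξ => ?_)
    simp only [add_sub_cancel_right, inner_add_left, ofReal_add, mul_add, exp_add]
    ring
  rw [invFourier2, invFourier2, hshift]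
  ring

lemma integrable_exp_inner_mul {F : E2 → ℂ} (hF : Integrable F) (x : E2) :
    Integrable fun ξ => exp (I * (inner ℝ ξ x : ℝ)) * F ξ :=
  hF.bdd_mul (c := 1) (by fun_prop) (.of_forall fun ξ => by
    rw [mul_comm, norm_exp_ofReal_mul_I])

lemma invFourier2_sub {F G : E2 → ℂ} (hF : Integrable F) (hG : Integrable G) :
    invFourier2 (F - G) = invFourier2 F - invFourier2 G := by
  ext x
  simp only [invFourier2, Pi.sub_apply, ← mul_sub,
    ← integral_sub (integrable_exp_inner_mul hF x) (integrable_exp_inner_mul hG x)]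

lemma invFourier2_eq_fourierInv (F : E2 → ℂ) (x : E2) :
    invFourier2 F x = (1 / (2 * Real.pi) ^ 2 : ℂ) * 𝓕⁻ F ((2 * Real.pi)⁻¹ • x) := by
  rw [invFourier2, Real.fourierInv_eq']
  congr 1
  refine integral_congr_ae (Filter.Eventually.of_forall fun ξ => ?_)
  simp only [smul_eq_mul, real_inner_smul_right]
  congr 2
  push_cast
  field_simp

lemma exists_schwartz_eq_invFourier2 (g : 𝓢(E2, ℂ)) :
    ∃ s : 𝓢(E2, ℂ), ⇑s = invFourier2 g ∧ (g ≠ 0 → s ≠ 0) := by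
  have h2π : (2 * Real.pi)⁻¹ ≠ 0 := by positivity
  let dilation : E2 ≃L[ℝ] E2 := ContinuousLinearEquiv.smulLeft (Units.mk0 _ h2π)
  refine ⟨(1 / (2 * Real.pi) ^ 2 : ℂ) •
    SchwartzMap.compCLMOfContinuousLinearEquiv ℂ dilation (𝓕⁻ g), ?_, fun hg hs => hg ?_⟩
  · ext x
    simp only [smul_apply, SchwartzMap.compCLMOfContinuousLinearEquiv_apply,
      Function.comp_apply, dilation, ContinuousLinearEquiv.smulLeft_apply_apply, Units.smul_mk0,
      SchwartzMap.fourierInv_coe, invFourier2_eq_fourierInv, smul_eq_mul]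
  · have hc : (1 / (2 * Real.pi) ^ 2 : ℂ) ≠ 0 := by
      have := Real.pi_ne_zero
      simp [this]
    have hcomp := (smul_eq_zero.mp hs).resolve_left hc
    have hinv : 𝓕⁻ g = 0 := by
      ext y
      simpa [dilation] using congr($hcomp (dilation.symm y))
    rw [← FourierTransform.fourier_fourierInv_eq (F := 𝓢(E2, ℂ)) g, hinv,
      FourierTransform.fourier_zero]

def dipole {V : Type*} [NormedAddCommGroup V] (G : V → ℂ) (p : V) (ξ : V) : ℂ := G (ξ - p) - G (ξ + p)

lemma dipole_eq_zero_of_notMem_closedBall {V : Type*} [NormedAddCommGroup V] {G : V → ℂ} {r : ℝ}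
    (hG : ∀ ξ ∉ Metric.closedBall 0 r, G ξ = 0) (p : V) :
    ∀ ξ ∉ Metric.closedBall 0 (‖p‖ + r), dipole G p ξ = 0 := by
  intro ξ hξ
  simp only [Metric.mem_closedBall, dist_zero_right, not_le] at hξ hG
  have hsub : r < ‖ξ - p‖ := by linarith [norm_sub_norm_le ξ p]
  have hadd : r < ‖ξ + p‖ := by linarith [norm_sub_le_norm_add ξ p, norm_sub_norm_le ξ p]
  rw [dipole, hG _ hsub, hG _ hadd, sub_zero]

lemma invFourier2_dipole {G : E2 → ℂ} (hG : Integrable G) (p x : E2) :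
    invFourier2 (dipole G p) x = 2 * I * sin (inner ℝ p x : ℝ) * invFourier2 G x := by
  have hdip : dipole G p = (fun ξ => G (ξ - p)) - fun ξ => G (ξ - -p) := by
    ext ξ
    simp [dipole]
  rw [hdip, invFourier2_sub (hG.comp_sub_right p) (hG.comp_sub_right (-p)), Pi.sub_apply,
    invFourier2_comp_sub, invFourier2_comp_sub, inner_neg_left, sin]
  push_cast
  ring_nf
  rw [I_sq]
  ring_nf

lemma inner_gridPt_gridPt (a b : ℝ) (k m : ℤ × ℤ) :
    inner ℝ (gridPt a k) (gridPt b m) = (k.1 * m.1 + k.2 * m.2) * (a * b) := by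
  simp [gridPt, PiLp.inner_apply, Fin.sum_univ_two]
  ring

lemma norm_gridPt_one_zero (a : ℝ) : ‖gridPt a (1, 0)‖ = |a| := by
  simp [EuclideanSpace.norm_eq, gridPt, Fin.sum_univ_two, Real.sqrt_sq_eq_abs]

lemma exists_schwartz_dipole {p : E2} {Ω : ℝ} (hp : 0 < ‖p‖) (hpΩ : ‖p‖ < Ω) :
    ∃ g : 𝓢(E2, ℂ), g ≠ 0 ∧ (∀ ξ ∉ Metric.closedBall 0 Ω, g ξ = 0) ∧
      ∀ x, Real.sin (inner ℝ p x) = 0 → invFourier2 g x = 0 := by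
  -- `r ≤ ‖p‖` keeps the two bumps apart, `r ≤ Ω - ‖p‖` keeps them inside the ball
  set r := min ‖p‖ (Ω - ‖p‖)
  have hr : 0 < r := lt_min hp (sub_pos.mpr hpΩ)
  let ψ : ContDiffBump (0 : E2) := ⟨r / 2, r, half_pos hr, half_lt_self hr⟩
  let G : E2 → ℂ := fun ξ => (ψ ξ : ℂ)
  have hG_supp : ∀ ξ ∉ Metric.closedBall 0 r, G ξ = 0 := fun ξ hξ => by
    simp [G, ψ.zero_of_le_dist (le_of_lt (by simpa using hξ))]
  have hG_int : Integrable G :=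
    (ψ.continuous.integrable_of_hasCompactSupport ψ.hasCompactSupport).ofReal
  have hdip_supp := dipole_eq_zero_of_notMem_closedBall hG_supp p
  have hG_smooth : ContDiff ℝ ∞ G := ofRealCLM.contDiff.comp ψ.contDiff
  have hdip_smooth : ContDiff ℝ ∞ (dipole G p) :=
    (hG_smooth.comp (contDiff_id.sub contDiff_const)).sub
      (hG_smooth.comp (contDiff_id.add contDiff_const))
  let g := (HasCompactSupport.intro (isCompact_closedBall _ _) hdip_supp).toSchwartzMap hdip_smooth
  refine ⟨g, fun hg => ?_, fun ξ hξ => hdip_supp ξ fun h => hξ ?_, fun x hx => ?_⟩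
  · have hψ0 : ψ 0 = 1 := ψ.one_of_mem_closedBall (by simp [ψ]; positivity)
    have hψ2p : ψ (p + p) = 0 := ψ.zero_of_le_dist (by
      simp only [dist_zero_right, ← two_smul ℝ p, norm_smul]
      simp [ψ]
      linarith [min_le_left ‖p‖ (Ω - ‖p‖)])
    simpa [g, dipole, G, hψ0, hψ2p] using congr($hg p)
  · exact Metric.closedBall_subset_closedBall (by linarith [min_le_right ‖p‖ (Ω - ‖p‖)]) h
  · change invFourier2 (dipole G p) x = 0
    rw [invFourier2_dipole hG_int, ← ofReal_sin, hx]
    simp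

/-- **Necessity of the two-dimensional Nyquist rate.**  If `h > π/Ω` there is a
nonzero continuous `f ∈ L²(ℝ²)` with Fourier transform supported in the closed
ball of radius `Ω` vanishing at all grid points `kh`, `k ∈ ℤ²`; in particular
`Ω`-band-limited functions on `ℝ²` are not uniquely determined by their
samples on the grid `hℤ²`. -/
theorem nyquist_necessity_2d
    (Ω h : ℝ) (hΩ : 0 < Ω) (hh : Real.pi / Ω < h) :
    (∃ F : E2 → ℂ, Integrable F ∧
      (∀ ξ : E2, ξ ∉ Metric.closedBall (0 : E2) Ω → F ξ = 0) ∧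
      MemLp (invFourier2 F) 2 volume ∧
      Continuous (invFourier2 F) ∧
      invFourier2 F ≠ 0 ∧
      (∀ k : ℤ × ℤ, invFourier2 F (gridPt h k) = 0)) ∧
    ¬ (∀ F G : E2 → ℂ, Integrable F → Integrable G →
        (∀ ξ : E2, ξ ∉ Metric.closedBall (0 : E2) Ω → F ξ = 0) →
        (∀ ξ : E2, ξ ∉ Metric.closedBall (0 : E2) Ω → G ξ = 0) →
        (∀ k : ℤ × ℤ, invFourier2 F (gridPt h k) = invFourier2 G (gridPt h k)) →
        invFourier2 F = invFourier2 G) := by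
  have hh0 : 0 < h := (div_pos Real.pi_pos hΩ).trans hh
  have hω : 0 < Real.pi / h := div_pos Real.pi_pos hh0
  have hωΩ : Real.pi / h < Ω := (div_lt_comm₀ hh0 hΩ).mpr hh
  let p := gridPt (Real.pi / h) (1, 0)
  have hp : ‖p‖ = Real.pi / h := by rw [norm_gridPt_one_zero, abs_of_pos hω]
  obtain ⟨g, hg0, hg_supp, hg_grid⟩ := exists_schwartz_dipole (hp ▸ hω) (hp ▸ hωΩ)
  obtain ⟨s, hs, hs0⟩ := exists_schwartz_eq_invFourier2 g
  have hgrid : ∀ k : ℤ × ℤ, invFourier2 g (gridPt h k) = 0 := fun k => hg_grid _ <| by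
    rw [inner_gridPt_gridPt, div_mul_cancel₀ _ hh0.ne']
    simp
  have hne : invFourier2 g ≠ 0 := hs ▸ fun h0 => hs0 hg0 (DFunLike.coe_injective h0)
  refine ⟨⟨g, g.integrable, hg_supp, hs ▸ s.memLp 2, hs ▸ s.continuous, hne, hgrid⟩,
    fun huniq => hne ?_⟩
  rw [huniq g 0 g.integrable (integrable_zero _ _ _) hg_supp (fun _ _ => rfl)
    (fun k => by rw [hgrid, invFourier2_zero]; rfl), invFourier2_zero]
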